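/- Let (X, μ) be a probability space, let φ : X → ℝ be bounded measurable with S := ess sup_μ φ and A := ∫_X (−φ) dμ. Let n ≥ 1 be real, δ ∈ (n/(n+1), 1), and D, C₂ > 0, C₁ > 0 constants, and let g : X → ℝ be measurable with |g| ≤ D μ-almost everywhere. Suppose (i) ∫_X exp(δ S + (1−δ) φ + g) dμ ≤ C₁, and (ii) A ≤ n S + C₂. Then, with E := (log C₁ + D)/δ, one has A ≤ δ (n E + C₂) / ((n+1)δ − n) and S ≤ ((1−δ)/δ) · δ (n E + C₂)/((n+1)δ − n) + E; in particular both A and S are bounded by a constant depending only on n, δ, D, C₁, C₂. -/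

import Mathlib

open MeasureTheory Real

/-!
By Jensen's inequality for `exp`, hypothesis (i) gives `δ S - (1 - δ) A ≤ log C₁ + D = δ E`,
i.e. `S ≤ ((1 - δ) / δ) A + E`. Feeding this into (ii) yields `A ≤ (n (1 - δ) / δ) A + n E + C₂`,
and `δ > n / (n + 1)` is exactly the condition `n (1 - δ) / δ < 1` that lets `A` be absorbed
into the left-hand side. The bound on `S` then follows from the first inequality.
-/

theorem le_bounds_of_coupled_linear_ineqs {n δ S A E C₂ : ℝ} (hn : 0 ≤ n)
    (hδ : n / (n + 1) < δ) (hδ1 : δ ≤ 1) (hS : δ * S ≤ (1 - δ) * A + δ * E)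
    (hA : A ≤ n * S + C₂) :
    A ≤ δ * (n * E + C₂) / ((n + 1) * δ - n) ∧
      S ≤ (1 - δ) / δ * (δ * (n * E + C₂) / ((n + 1) * δ - n)) + E := by
  have hcoef : 0 < (n + 1) * δ - n := by
    rw [div_lt_iff₀ (by linarith)] at hδ
    linarith
  have hδ0 : 0 < δ := lt_of_le_of_lt (div_nonneg hn (by linarith)) hδ
  have hA' : A ≤ δ * (n * E + C₂) / ((n + 1) * δ - n) := by
    rw [le_div_iff₀ hcoef]
    linarith [mul_le_mul_of_nonneg_left hA hδ0.le, mul_le_mul_of_nonneg_left hS hn]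
  have hS' : S ≤ (1 - δ) / δ * A + E := by
    rw [div_mul_eq_mul_div, div_add' _ _ _ hδ0.ne', le_div_iff₀ hδ0]
    linarith
  refine ⟨hA', hS'.trans ?_⟩
  gcongr

section

variable {X : Type*} [MeasurableSpace X] {μ : Measure X}

theorem integrable_exp_of_ae_le [IsFiniteMeasure μ] {f : X → ℝ} (hf : AEStronglyMeasurable f μ)
    {K : ℝ} (hK : ∀ᵐ x ∂μ, f x ≤ K) : Integrable (fun x ↦ exp (f x)) μ :=
  .of_bound (continuous_exp.comp_aestronglyMeasurable hf) (exp K) <| by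
    filter_upwards [hK] with x hx
    rw [norm_of_nonneg (exp_pos _).le]
    exact exp_le_exp.2 hx

variable [IsProbabilityMeasure μ]

theorem integral_le_log_of_integral_exp_le {f : X → ℝ} (hf : Integrable f μ)
    (hexp : Integrable (fun x ↦ exp (f x)) μ) {C : ℝ} (h : ∫ x, exp (f x) ∂μ ≤ C) :
    ∫ x, f x ∂μ ≤ log C := by
  have jensen : exp (∫ x, f x ∂μ) ≤ ∫ x, exp (f x) ∂μ :=
    convexOn_exp.map_integral_le continuous_exp.continuousOn isClosed_univ
      (.of_forall fun _ ↦ Set.mem_univ _) hf hexp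
  have hexpC := jensen.trans h
  exact (le_log_iff_exp_le ((exp_pos _).trans_le hexpC)).2 hexpC

theorem add_mul_integral_le_log_add_of_integral_exp_le {φ g : X → ℝ} (hφ : Integrable φ μ)
    (hg : Integrable g μ) {D : ℝ} (hgD : ∀ᵐ x ∂μ, -D ≤ g x) (c t : ℝ) {C : ℝ}
    (hexp : Integrable (fun x ↦ exp (c + t * φ x + g x)) μ)
    (h : ∫ x, exp (c + t * φ x + g x) ∂μ ≤ C) :
    c + t * ∫ x, φ x ∂μ ≤ log C + D := by
  have hlin : Integrable (fun x ↦ c + t * φ x) μ := (integrable_const c).add (hφ.const_mul t)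
  have hjensen : ∫ x, (c + t * φ x + g x) ∂μ ≤ log C :=
    integral_le_log_of_integral_exp_le (hlin.add hg) hexp h
  have hgint : -D ≤ ∫ x, g x ∂μ := by
    simpa using integral_mono_ae (integrable_const (-D)) hg hgD
  rw [integral_add hlin hg, integral_add (integrable_const c) (hφ.const_mul t),
    integral_const_mul, integral_const, probReal_univ, one_smul] at hjensen
  linarith

end

theorem stmt6_general {X : Type*} [MeasurableSpace X] (μ : Measure X) [IsProbabilityMeasure μ]
    (φ : X → ℝ) (hφ : Measurable φ) (M : ℝ) (hbd : ∀ x, |φ x| ≤ M)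
    (S A : ℝ) (hA : A = ∫ x, (-φ x) ∂μ)
    (n : ℝ) (hn : 1 ≤ n) (δ : ℝ) (hδ : n / (n + 1) < δ) (hδ1 : δ < 1)
    (D C₂ C₁ : ℝ)
    (g : X → ℝ) (hg : Measurable g) (hgD : ∀ᵐ x ∂μ, |g x| ≤ D)
    (hi : (∫ x, Real.exp (δ * S + (1 - δ) * φ x + g x) ∂μ) ≤ C₁)
    (hii : A ≤ n * S + C₂)
    (E : ℝ) (hE : E = (Real.log C₁ + D) / δ) :
    A ≤ δ * (n * E + C₂) / ((n + 1) * δ - n) ∧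
      S ≤ (1 - δ) / δ * (δ * (n * E + C₂) / ((n + 1) * δ - n)) + E := by
  have hδ0 : 0 < δ := (div_pos (by linarith) (by linarith)).trans hδ
  have hφi : Integrable φ μ := .of_bound hφ.aestronglyMeasurable M (.of_forall hbd)
  have hgi : Integrable g μ := .of_bound hg.aestronglyMeasurable D hgD
  have hexp : Integrable (fun x ↦ exp (δ * S + (1 - δ) * φ x + g x)) μ := by
    have hf := ((integrable_const (δ * S)).add (hφi.const_mul (1 - δ))).add hgi
    refine integrable_exp_of_ae_le hf.aestronglyMeasurable (K := δ * S + (1 - δ) * M + D) ?_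
    filter_upwards [hgD] with x hx
    have hφM := mul_le_mul_of_nonneg_left (abs_le.1 (hbd x)).2 (sub_nonneg.2 hδ1.le)
    linarith [(abs_le.1 hx).2]
  have hjensen := add_mul_integral_le_log_add_of_integral_exp_le hφi hgi
    (hgD.mono fun x hx ↦ (abs_le.1 hx).1) _ _ hexp hi
  have hIφ : ∫ x, φ x ∂μ = -A := by rw [hA, integral_neg, neg_neg]
  have hδE : log C₁ + D = δ * E := by rw [hE]; field_simp
  rw [hIφ, hδE] at hjensen
  exact le_bounds_of_coupled_linear_ineqs (by linarith) hδ hδ1.le (by linarith) hii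

/-- Analytic mechanism of Theorem 4.1 (α-invariant > n/(n+1) case): combining the
α-invariant bound (i) with the F-functional inequality (ii) `A ≤ nS + C₂`, where
`S = ess sup φ` and `A = ∫(-φ) dμ`, yields uniform bounds on both `A` and `S`. -/
theorem stmt6 {X : Type*} [MeasurableSpace X] (μ : Measure X) [IsProbabilityMeasure μ]
    (φ : X → ℝ) (hφ : Measurable φ) (M : ℝ) (hbd : ∀ x, |φ x| ≤ M)
    (S A : ℝ) (hS : S = essSup φ μ) (hA : A = ∫ x, (-φ x) ∂μ)
    (n : ℝ) (hn : 1 ≤ n) (δ : ℝ) (hδ : n / (n + 1) < δ) (hδ1 : δ < 1)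
    (D C₂ C₁ : ℝ) (hD : 0 < D) (hC₂ : 0 < C₂) (hC₁ : 0 < C₁)
    (g : X → ℝ) (hg : Measurable g) (hgD : ∀ᵐ x ∂μ, |g x| ≤ D)
    (hi : (∫ x, Real.exp (δ * S + (1 - δ) * φ x + g x) ∂μ) ≤ C₁)
    (hii : A ≤ n * S + C₂)
    (E : ℝ) (hE : E = (Real.log C₁ + D) / δ) :
    A ≤ δ * (n * E + C₂) / ((n + 1) * δ - n) ∧
      S ≤ (1 - δ) / δ * (δ * (n * E + C₂) / ((n + 1) * δ - n)) + E :=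
  stmt6_general μ φ hφ M hbd S A hA n hn δ hδ hδ1 D C₂ C₁ g hg hgD hi hii E hE
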